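/- arXiv:1307.1800 — 3 statements merged into one kernel-verified Lean document; each statement's English description precedes it below -/
import Mathlib

section
/- For d ≥ 3, 1 ≤ r < d/2, the two-variable generating function f_{d,r}(x;q) = Σ_{m,n≥0} β_{d,r,0}(m,n) x^m q^n satisfies the q-difference equation f_{d,r}(x) = (1 + x q^r + x q^{d-r}) f_{d,r}(x q^d) + x q^d (1 - x q^d) f_{d,r}(x q^{2d}). -/
/-- A Schur-type partition for parameters `d, r`, represented as a weakly decreasing
list of parts: all parts are positive and congruent to `0`, `r` or `d - r` mod `d`,
consecutive parts differ by at least `d`, and by strictly more than `d` whenever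
the larger part is divisible by `d`. -/
def IsSchurPartition (d r : ℕ) (l : List ℕ) : Prop :=
  (∀ x ∈ l, 0 < x ∧ (x % d = 0 ∨ x % d = r ∨ x % d = d - r)) ∧
    l.Chain' (fun a b => b + d ≤ a ∧ (d ∣ a → b + d < a))

/-- `schurBeta d r m n` is the number of Schur-type partitions of `n` into exactly
`m` parts (the refined enumeration function `β_{d,r,0}(m,n)`, with
`β_{d,r,0}(0,0) = 1` counting the empty partition). -/
noncomputable def schurBeta (d r m n : ℕ) : ℕ :=
  Set.ncard {l : List ℕ | IsSchurPartition d r l ∧ l.length = m ∧ l.sum = n}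

/-- The two-variable generating function
`f_{d,r}(x;q) = Σ_{m,n≥0} β_{d,r,0}(m,n) x^m q^n`. -/
noncomputable def schurF (d r : ℕ) (x q : ℂ) : ℂ :=
  ∑' p : ℕ × ℕ, (schurBeta d r p.1 p.2 : ℂ) * x ^ p.1 * q ^ p.2

/-!
A Schur partition is either empty or has all parts `> d`, or its smallest part is `r`, `d - r`
or `d`. Removing the smallest part and lowering the remaining parts by `d` (by `2d` when the
smallest part is `d`, because of the strict gap above multiples of `d`) is a bijection onto all
Schur partitions, except that for smallest part `d - r` the image consists of the Schur
partitions whose smallest part is not `r`. In the weights `x ^ length * q ^ sum` lowering the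
parts by `c` replaces `x` by `x q^c`, which turns the four classes into the four terms of the
equation. The parts are distinct, so the weights are dominated by the expansion of
`∏ (1 + |x| |q|^i)` and all series converge absolutely.
-/

namespace SchurPartition

variable {d r : ℕ}

def Gap (d a b : ℕ) : Prop := b + d ≤ a ∧ (d ∣ a → b + d < a)

def IsAllowedPart (d r x : ℕ) : Prop := 0 < x ∧ (x % d = 0 ∨ x % d = r ∨ x % d = d - r)

theorem Gap.trans {a b c : ℕ} (hab : Gap d a b) (hbc : Gap d b c) : Gap d a c :=
  ⟨by have := hab.1; have := hbc.1; omega, fun h => by have := hab.2 h; have := hbc.1; omega⟩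

theorem gap_add_iff {a b c : ℕ} (hc : d ∣ c) : Gap d (a + c) (b + c) ↔ Gap d a b := by
  unfold Gap
  rw [Nat.dvd_add_left hc]
  constructor <;> rintro ⟨hle, hlt⟩ <;> exact ⟨by omega, fun h => by have := hlt h; omega⟩

theorem isAllowedPart_add_iff {x c : ℕ} (hc : d ∣ c) (hx : 0 < x) :
    IsAllowedPart d r (x + c) ↔ IsAllowedPart d r x := by
  obtain ⟨k, rfl⟩ := hc
  simp [IsAllowedPart, Nat.add_mul_mod_self_left, hx]

theorem IsAllowedPart.eq_of_le {x : ℕ} (h : IsAllowedPart d r x) (hx : x ≤ d) :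
    x = r ∨ x = d - r ∨ x = d := by
  obtain ⟨hpos, hmod⟩ := h
  rcases hx.lt_or_eq with hx | hx
  · rw [Nat.mod_eq_of_lt hx] at hmod
    omega
  · exact Or.inr (Or.inr hx)

theorem IsAllowedPart.eq_or_le {x : ℕ} (h : IsAllowedPart d r x) : x = r ∨ d - r ≤ x := by
  by_cases hx : x ≤ d
  · rcases h.eq_of_le hx with h | h | h <;> omega
  · omega

theorem isSchurPartition_iff {l : List ℕ} :
    IsSchurPartition d r l ↔ (∀ x ∈ l, IsAllowedPart d r x) ∧ l.Pairwise (Gap d) :=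
  haveI : Trans (Gap d) (Gap d) (Gap d) := ⟨Gap.trans⟩
  and_congr_right' (List.isChain_iff_pairwise (R := Gap d))

theorem _root_.IsSchurPartition.pos {l : List ℕ} (h : IsSchurPartition d r l) :
    ∀ x ∈ l, 0 < x :=
  fun x hx => (h.1 x hx).1

theorem _root_.IsSchurPartition.pairwise_gt {l : List ℕ} (h : IsSchurPartition d r l)
    (hd : 0 < d) : l.Pairwise (· > ·) :=
  (isSchurPartition_iff.1 h).2.imp fun hab => by have := hab.1; omega

theorem isSchurPartition_map_add_iff {c : ℕ} {l : List ℕ} (hc : d ∣ c)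
    (hl : ∀ x ∈ l, 0 < x) :
    IsSchurPartition d r (l.map (· + c)) ↔ IsSchurPartition d r l := by
  simp only [isSchurPartition_iff, List.forall_mem_map, List.pairwise_map, gap_add_iff hc]
  exact and_congr_left' (forall₂_congr fun x hx => isAllowedPart_add_iff hc (hl x hx))

theorem map_sub_map_add {c : ℕ} {l : List ℕ} (hl : ∀ x ∈ l, c ≤ x) :
    (l.map (· - c)).map (· + c) = l := by
  rw [List.map_map]
  exact (List.map_congr_left fun x hx => Nat.sub_add_cancel (hl x hx)).trans l.map_id

theorem isSchurPartition_map_sub_iff {c : ℕ} {l : List ℕ} (hc : d ∣ c)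
    (hl : ∀ x ∈ l, c < x) :
    IsSchurPartition d r (l.map (· - c)) ↔ IsSchurPartition d r l := by
  conv_rhs => rw [← map_sub_map_add fun x hx => (hl x hx).le]
  refine (isSchurPartition_map_add_iff hc ?_).symm
  simpa using fun x hx => hl x hx

theorem isSchurPartition_append_singleton_iff {l : List ℕ} {s : ℕ} :
    IsSchurPartition d r (l ++ [s]) ↔
      IsSchurPartition d r l ∧ IsAllowedPart d r s ∧ ∀ x ∈ l, Gap d x s := by
  simp only [isSchurPartition_iff, List.pairwise_append, List.mem_append, List.mem_singleton,
    List.pairwise_singleton, or_imp, forall_and, forall_eq, true_and]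
  tauto

theorem _root_.IsSchurPartition.le_of_getLast?_eq {l : List ℕ} {s : ℕ}
    (h : IsSchurPartition d r l) (hs : l.getLast? = some s) : ∀ x ∈ l, s ≤ x := by
  obtain ⟨l, rfl⟩ := List.getLast?_eq_some_iff.1 hs
  intro x hx
  rcases List.mem_append.1 hx with hx | hx
  · have := ((isSchurPartition_append_singleton_iff.1 h).2.2 x hx).1
    omega
  · exact (List.mem_singleton.1 hx).ge

def schurSet (d r : ℕ) : Set (List ℕ) := {l | IsSchurPartition d r l}

def schurSetGt (d r : ℕ) : Set (List ℕ) := {l ∈ schurSet d r | ∀ x ∈ l, d < x}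

def schurSetLast (d r s : ℕ) : Set (List ℕ) := {l ∈ schurSet d r | l.getLast? = some s}

def shiftAppend (c s : ℕ) (l : List ℕ) : List ℕ := l.map (· + c) ++ [s]

theorem shiftAppend_injective (c s : ℕ) : Function.Injective (shiftAppend c s) := fun _ _ h =>
  List.map_injective_iff.2 (add_left_injective c) (List.append_cancel_right h)

theorem image_map_add_schurSet : List.map (· + d) '' schurSet d r = schurSetGt d r := by
  ext l
  constructor
  · rintro ⟨l, hl, rfl⟩
    exact ⟨(isSchurPartition_map_add_iff (dvd_refl d) hl.pos).2 hl, by simpa using hl.pos⟩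
  · rintro ⟨hl, hgt⟩
    exact ⟨l.map (· - d), (isSchurPartition_map_sub_iff (dvd_refl d) hgt).2 hl,
      map_sub_map_add fun x hx => (hgt x hx).le⟩

theorem image_shiftAppend {c s : ℕ} (hc : d ∣ c) (P : ℕ → Prop) (hs : IsAllowedPart d r s)
    (hcross : ∀ y, IsAllowedPart d r y → P y → Gap d (y + c) s)
    (hback : ∀ x, IsAllowedPart d r x → Gap d x s → c < x ∧ P (x - c)) :
    shiftAppend c s '' {l ∈ schurSet d r | ∀ x ∈ l, P x} = schurSetLast d r s := by
  ext l
  constructor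
  · rintro ⟨l, ⟨hl, hP⟩, rfl⟩
    refine ⟨isSchurPartition_append_singleton_iff.2
      ⟨(isSchurPartition_map_add_iff hc hl.pos).2 hl, hs, ?_⟩, List.getLast?_concat⟩
    simpa using fun y hy => hcross y (hl.1 y hy) (hP y hy)
  · rintro ⟨hl, hlast⟩
    obtain ⟨l, rfl⟩ := List.getLast?_eq_some_iff.1 hlast
    obtain ⟨hl, -, hgap⟩ := isSchurPartition_append_singleton_iff.1 hl
    have hback' : ∀ x ∈ l, c < x ∧ P (x - c) := fun x hx => hback x (hl.1 x hx) (hgap x hx)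
    refine ⟨l.map (· - c), ⟨(isSchurPartition_map_sub_iff hc fun x hx => (hback' x hx).1).2 hl,
      by simpa using fun x hx => (hback' x hx).2⟩, ?_⟩
    rw [shiftAppend, map_sub_map_add fun x hx => (hback' x hx).1.le]

theorem schurSet_eq_union :
    schurSet d r = schurSetGt d r ∪ schurSetLast d r r ∪ schurSetLast d r (d - r) ∪
      schurSetLast d r d := by
  ext l
  refine ⟨fun hl => ?_, by rintro (((h | h) | h) | h) <;> exact h.1⟩
  simp only [Set.mem_union]
  rcases hlast : l.getLast? with _ | s
  · rw [List.getLast?_eq_none_iff] at hlast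
    exact Or.inl (Or.inl (Or.inl ⟨hl, by simp [hlast]⟩))
  · by_cases hsd : s ≤ d
    · rcases IsAllowedPart.eq_of_le (hl.1 s (List.mem_of_getLast? hlast)) hsd with rfl | rfl | rfl
      · exact Or.inl (Or.inl (Or.inr ⟨hl, hlast⟩))
      · exact Or.inl (Or.inr ⟨hl, hlast⟩)
      · exact Or.inr ⟨hl, hlast⟩
    · exact Or.inl (Or.inl (Or.inl ⟨hl, fun x hx =>
        (not_le.1 hsd).trans_le (hl.le_of_getLast?_eq hlast x hx)⟩))

theorem disjoint_schurSetGt_schurSetLast {s : ℕ} (hs : s ≤ d) :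
    Disjoint (schurSetGt d r) (schurSetLast d r s) := by
  rw [Set.disjoint_left]
  rintro l ⟨_, hgt⟩ ⟨_, hlast⟩
  exact absurd (hgt s (List.mem_of_getLast? hlast)) (not_lt.2 hs)

theorem disjoint_schurSetLast {s t : ℕ} (hst : s ≠ t) :
    Disjoint (schurSetLast d r s) (schurSetLast d r t) := by
  rw [Set.disjoint_left]
  rintro l ⟨_, hs⟩ ⟨_, ht⟩
  exact hst (Option.some_injective _ (hs.symm.trans ht))

theorem setOf_forall_gt_eq_diff (hr2 : 2 * r < d) :
    {l ∈ schurSet d r | ∀ x ∈ l, r < x} = schurSet d r \ schurSetLast d r r := by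
  ext l
  constructor
  · rintro ⟨hl, hgt⟩
    refine ⟨hl, fun ⟨_, hlast⟩ => ?_⟩
    obtain ⟨l, rfl⟩ := List.getLast?_eq_some_iff.1 hlast
    exact lt_irrefl r (hgt r (by simp))
  · rintro ⟨hl, hnot⟩
    refine ⟨hl, fun x hx => ?_⟩
    obtain ⟨s, hs⟩ := Option.ne_none_iff_exists'.1
      (List.getLast?_eq_none_iff.not.2 (List.ne_nil_of_mem hx))
    have hsx := hl.le_of_getLast?_eq hs x hx
    have hsr : s ≠ r := fun h => hnot ⟨hl, h ▸ hs⟩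
    rcases IsAllowedPart.eq_or_le (hl.1 s (List.mem_of_getLast? hs)) with h | h <;> omega

section

variable (hr1 : 1 ≤ r) (hr2 : 2 * r < d)
include hr1 hr2

theorem image_shiftAppend_r : shiftAppend d r '' schurSet d r = schurSetLast d r r := by
  have himage := image_shiftAppend (r := r) (dvd_refl d) (fun _ => True)
    ⟨hr1, Or.inr (Or.inl (Nat.mod_eq_of_lt (by omega)))⟩ ?_ ?_
  · simpa using himage
  · intro y hy _
    refine ⟨by rcases hy.eq_or_le with h | h <;> omega, fun hdy => ?_⟩
    have := Nat.le_of_dvd hy.1 ((Nat.dvd_add_left (dvd_refl d)).1 hdy)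
    omega
  · intro x _ hx
    exact ⟨by have := hx.1; omega, trivial⟩

theorem image_shiftAppend_sub :
    shiftAppend d (d - r) '' {l ∈ schurSet d r | ∀ x ∈ l, r < x} =
      schurSetLast d r (d - r) := by
  refine image_shiftAppend (dvd_refl d) _
    ⟨by omega, Or.inr (Or.inr (Nat.mod_eq_of_lt (by omega)))⟩ ?_ ?_
  · intro y hy hry
    refine ⟨by rcases hy.eq_or_le with h | h <;> omega, fun hdy => ?_⟩
    have := Nat.le_of_dvd hy.1 ((Nat.dvd_add_left (dvd_refl d)).1 hdy)
    omega
  · intro x _ hx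
    have := hx.1
    omega

theorem image_shiftAppend_d : shiftAppend (2 * d) d '' schurSet d r = schurSetLast d r d := by
  have himage := image_shiftAppend (r := r) (Dvd.intro_left 2 rfl) (fun _ => True)
    ⟨by omega, Or.inl (Nat.mod_self d)⟩ ?_ ?_
  · simpa using himage
  · intro y hy _
    exact ⟨by omega, fun _ => by have := hy.1; omega⟩
  · intro x _ hx
    refine ⟨?_, trivial⟩
    by_cases hdx : d ∣ x
    · have := hx.2 hdx
      omega
    · have := hx.1
      have : x ≠ 2 * d := fun h => hdx (h ▸ Dvd.intro_left 2 rfl)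
      omega

end

def weight (x q : ℂ) (l : List ℕ) : ℂ := x ^ l.length * q ^ l.sum

theorem weight_eq_prod (x q : ℂ) (l : List ℕ) : weight x q l = (l.map (x * q ^ ·)).prod := by
  induction l with
  | nil => simp [weight]
  | cons a l ih =>
    rw [List.map_cons, List.prod_cons, ← ih]
    simp only [weight, List.length_cons, List.sum_cons, pow_succ, pow_add]
    ring

theorem weight_map_add (x q : ℂ) (c : ℕ) (l : List ℕ) :
    weight x q (l.map (· + c)) = weight (x * q ^ c) q l := by
  simp only [weight_eq_prod, List.map_map]
  congr 1
  exact List.map_congr_left fun a _ => by simp [pow_add]; ring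

theorem weight_shiftAppend (x q : ℂ) (c s : ℕ) (l : List ℕ) :
    weight x q (shiftAppend c s l) = x * q ^ s * weight (x * q ^ c) q l := by
  rw [shiftAppend, weight_eq_prod, List.map_append, List.prod_append, ← weight_eq_prod,
    weight_map_add]
  simp [mul_comm]

theorem summable_weight {q : ℂ} (hd : 0 < d) (hq : ‖q‖ < 1) {T : Set (List ℕ)}
    (hT : T ⊆ schurSet d r) (x : ℂ) : Summable fun l : T => weight x q l := by
  have hprod : Summable fun F : Finset ℕ => ∏ i ∈ F, x * q ^ i :=
    summable_finsetProd_of_summable_norm <| by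
      simpa [norm_pow] using (summable_geometric_of_lt_one (norm_nonneg q) hq).mul_left ‖x‖
  have hinj : Function.Injective fun l : T => l.1.toFinset :=
    fun l₁ l₂ (h : l₁.1.toFinset = _) => Subtype.ext <|
      ((hT l₁.2).pairwise_gt hd).eq_of_mem_iff ((hT l₂.2).pairwise_gt hd)
        fun a => by rw [← List.mem_toFinset, h, List.mem_toFinset]
  refine (hprod.comp_injective hinj).congr fun l => ?_
  rw [Function.comp_apply, List.prod_toFinset _ ((hT l.2).pairwise_gt hd).nodup, weight_eq_prod]

theorem schurF_eq_tsum_weight {q : ℂ} (hd : 0 < d) (hq : ‖q‖ < 1) (x : ℂ) :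
    schurF d r x q = ∑' l : schurSet d r, weight x q l := by
  let g : schurSet d r → ℕ × ℕ := fun l => (l.1.length, l.1.sum)
  rw [← ((summable_weight hd hq subset_rfl x).hasSum.tsum_fiberwise g).tsum_eq, schurF]
  refine tsum_congr fun p => ?_
  have hw : ∀ l : g ⁻¹' {p}, weight x q l.1.1 = x ^ p.1 * q ^ p.2 := by
    rintro ⟨l, hl⟩
    simp only [Set.mem_preimage, Set.mem_singleton_iff, g] at hl
    simp [weight, ← hl]
  have hcard : Nat.card (g ⁻¹' {p}) = schurBeta d r p.1 p.2 := by
    rw [Nat.card_coe_set_eq, ← Set.ncard_image_of_injective _ Subtype.val_injective, schurBeta]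
    congr 1
    ext l
    simp [g, schurSet, Prod.ext_iff, and_left_comm]
  rw [tsum_congr hw, tsum_const, hcard, nsmul_eq_mul, mul_assoc]

theorem tsum_weight_image_map_add (x q : ℂ) (c : ℕ) (T : Set (List ℕ)) :
    ∑' l : List.map (· + c) '' T, weight x q l = ∑' l : T, weight (x * q ^ c) q l := by
  rw [tsum_image _ (List.map_injective_iff.2 (add_left_injective c)).injOn]
  simp_rw [weight_map_add]

theorem tsum_weight_image_shiftAppend (x q : ℂ) (c s : ℕ) (T : Set (List ℕ)) :
    ∑' l : shiftAppend c s '' T, weight x q l =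
      x * q ^ s * ∑' l : T, weight (x * q ^ c) q l := by
  rw [tsum_image _ (shiftAppend_injective c s).injOn, ← tsum_mul_left]
  simp_rw [weight_shiftAppend]

theorem tsum_weight_union {q : ℂ} (hd : 0 < d) (hq : ‖q‖ < 1) {A B : Set (List ℕ)}
    (hA : A ⊆ schurSet d r) (hB : B ⊆ schurSet d r) (hAB : Disjoint A B) (x : ℂ) :
    ∑' l : ↥(A ∪ B), weight x q l = ∑' l : A, weight x q l + ∑' l : B, weight x q l :=
  Summable.tsum_union_disjoint (f := weight x q) hAB (summable_weight hd hq hA x)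
    (summable_weight hd hq hB x)

theorem tsum_weight_diff {q : ℂ} (hd : 0 < d) (hq : ‖q‖ < 1) {A B : Set (List ℕ)}
    (hA : A ⊆ schurSet d r) (hBA : B ⊆ A) (x : ℂ) :
    ∑' l : ↥(A \ B), weight x q l = ∑' l : A, weight x q l - ∑' l : B, weight x q l := by
  rw [eq_sub_iff_add_eq, ← tsum_weight_union hd hq (Set.sdiff_subset.trans hA) (hBA.trans hA)
    Set.disjoint_sdiff_left, Set.sdiff_union_of_subset hBA]

section

variable {q : ℂ} (hr1 : 1 ≤ r) (hr2 : 2 * r < d) (hq : ‖q‖ < 1)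
include hr1 hr2 hq

theorem tsum_weight_schurSet_split (x : ℂ) :
    ∑' l : schurSet d r, weight x q l =
      ∑' l : schurSetGt d r, weight x q l + ∑' l : schurSetLast d r r, weight x q l +
        ∑' l : schurSetLast d r (d - r), weight x q l +
          ∑' l : schurSetLast d r d, weight x q l := by
  have hd : 0 < d := by omega
  have hGt : schurSetGt d r ⊆ schurSet d r := fun _ h => h.1
  have hLast (s : ℕ) : schurSetLast d r s ⊆ schurSet d r := fun _ h => h.1
  rw [schurSet_eq_union,
    tsum_weight_union hd hq (Set.union_subset (Set.union_subset hGt (hLast r)) (hLast _)) (hLast d)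
      (Set.disjoint_union_left.2 ⟨Set.disjoint_union_left.2
        ⟨disjoint_schurSetGt_schurSetLast le_rfl, disjoint_schurSetLast (by omega)⟩,
        disjoint_schurSetLast (by omega)⟩),
    tsum_weight_union hd hq (Set.union_subset hGt (hLast r)) (hLast _)
      (Set.disjoint_union_left.2
        ⟨disjoint_schurSetGt_schurSetLast (by omega), disjoint_schurSetLast (by omega)⟩),
    tsum_weight_union hd hq hGt (hLast r) (disjoint_schurSetGt_schurSetLast (by omega))]

theorem tsum_weight_qDifference (x : ℂ) :
    ∑' l : schurSet d r, weight x q l =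
      (1 + x * q ^ r + x * q ^ (d - r)) * ∑' l : schurSet d r, weight (x * q ^ d) q l +
        x * q ^ d * (1 - x * q ^ d) * ∑' l : schurSet d r, weight (x * q ^ (2 * d)) q l := by
  have hd : 0 < d := by omega
  have hLast (y : ℂ) : ∑' l : schurSetLast d r r, weight y q l =
      y * q ^ r * ∑' l : schurSet d r, weight (y * q ^ d) q l := by
    rw [← image_shiftAppend_r hr1 hr2, tsum_weight_image_shiftAppend]
  have hSub : ∑' l : schurSetLast d r (d - r), weight x q l =
      x * q ^ (d - r) * (∑' l : schurSet d r, weight (x * q ^ d) q l -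
        ∑' l : schurSetLast d r r, weight (x * q ^ d) q l) := by
    rw [← image_shiftAppend_sub hr1 hr2, tsum_weight_image_shiftAppend,
      setOf_forall_gt_eq_diff hr2, tsum_weight_diff hd hq subset_rfl fun _ h => h.1]
  have hpow : q ^ (d - r) * q ^ r = q ^ d := by rw [← pow_add, Nat.sub_add_cancel (by omega)]
  have hsq : x * q ^ d * q ^ d = x * q ^ (2 * d) := by ring
  rw [tsum_weight_schurSet_split hr1 hr2 hq, ← image_map_add_schurSet, tsum_weight_image_map_add,
    hSub, hLast, hLast, ← image_shiftAppend_d hr1 hr2, tsum_weight_image_shiftAppend, hsq]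
  linear_combination (-(x ^ 2) * q ^ d * ∑' l : schurSet d r, weight (x * q ^ (2 * d)) q l) * hpow

end

end SchurPartition

theorem schurF_qDifference_general (d r : ℕ) (hr1 : 1 ≤ r) (hr2 : 2 * r < d)
    (x q : ℂ) (hq : ‖q‖ < 1) :
    schurF d r x q =
      (1 + x * q ^ r + x * q ^ (d - r)) * schurF d r (x * q ^ d) q +
        x * q ^ d * (1 - x * q ^ d) * schurF d r (x * q ^ (2 * d)) q := by
  have hd : 0 < d := by omega
  simp only [SchurPartition.schurF_eq_tsum_weight hd hq]
  exact SchurPartition.tsum_weight_qDifference hr1 hr2 hq x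

/-- The q-difference equation satisfied by the Schur-type generating function:
`f_{d,r}(x) = (1 + x q^r + x q^{d-r}) f_{d,r}(x q^d) + x q^d (1 - x q^d) f_{d,r}(x q^{2d})`. -/
theorem schurF_qDifference (d r : ℕ) (hd : 3 ≤ d) (hr1 : 1 ≤ r) (hr2 : 2 * r < d)
    (x q : ℂ) (hq : ‖q‖ < 1) (hx : ‖x‖ < 1) :
    schurF d r x q =
      (1 + x * q ^ r + x * q ^ (d - r)) * schurF d r (x * q ^ d) q +
        x * q ^ d * (1 - x * q ^ d) * schurF d r (x * q ^ (2 * d)) q :=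
  schurF_qDifference_general d r hr1 hr2 x q hq
end

section
/- If g(x) is a power series in x with g(0) = 1 satisfying (1-x) g(x) = (1 + x q^r + x q^{d-r}) g(x q^d) + x q^d g(x q^{2d}), with |q| < 1 and d ≥ 3, 1 ≤ r < d/2, then g(x) = Σ_{n≥0} x^n (-q^r; q^d)_n (-q^{d-r}; q^d)_n / (q^d; q^d)_n. -/
/-!
Comparing coefficients of `x^{n+1}` turns the q-difference equation into a first-order
recurrence for the coefficients of `g`, because `q^r q^{d-r} = q^d` makes the coefficient of
`g_n` factor as `(1 + q^{r+dn})(1 + q^{d-r+dn})`. Since `|q| < 1`, the leading factors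
`1 - q^{d(n+1)}` never vanish, so the recurrence together with `g_0 = 1` pins down every
coefficient, and the q-Pochhammer quotient satisfies it.
-/

open scoped BigOperators
open PowerSeries

/-- The finite q-Pochhammer symbol `(a; q)_n`. -/
noncomputable def qPoch (a q : ℂ) (n : ℕ) : ℂ := ∏ j ∈ Finset.range n, (1 - a * q ^ j)

lemma qPoch_succ (a q : ℂ) (n : ℕ) :
    qPoch a q (n + 1) = qPoch a q n * (1 - a * q ^ n) :=
  Finset.prod_range_succ _ _

lemma norm_pow_lt_one {q : ℂ} (hq : ‖q‖ < 1) {m : ℕ} (hm : m ≠ 0) : ‖q ^ m‖ < 1 := by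
  rw [norm_pow]
  exact pow_lt_one₀ (norm_nonneg q) hq hm

lemma one_sub_ne_zero_of_norm_lt_one {z : ℂ} (hz : ‖z‖ < 1) : 1 - z ≠ 0 :=
  sub_ne_zero.mpr fun h => by simp [← h] at hz

lemma qPoch_self_ne_zero {w : ℂ} (hw : ‖w‖ < 1) (n : ℕ) : qPoch w w n ≠ 0 :=
  Finset.prod_ne_zero_iff.mpr fun j _ => by
    rw [← pow_succ']
    exact one_sub_ne_zero_of_norm_lt_one (norm_pow_lt_one hw j.succ_ne_zero)

lemma eq_qPoch_div_qPoch_of_recurrence {u v w : ℂ} (hw : ∀ n, qPoch w w n ≠ 0) {A : ℕ → ℂ}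
    (h0 : A 0 = 1)
    (hrec : ∀ n, (1 - w ^ (n + 1)) * A (n + 1) = (1 + u * w ^ n) * (1 + v * w ^ n) * A n)
    (n : ℕ) : A n = qPoch (-u) w n * qPoch (-v) w n / qPoch w w n := by
  induction n with
  | zero => simp [qPoch, h0]
  | succ n ih =>
    have hden : 1 - w * w ^ n ≠ 0 := right_ne_zero_of_mul (qPoch_succ w w n ▸ hw (n + 1))
    have hstep : A (n + 1) = (1 + u * w ^ n) * (1 + v * w ^ n) * A n / (1 - w * w ^ n) :=
      eq_div_of_mul_eq hden (by rw [mul_comm, ← pow_succ', hrec])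
    rw [hstep, ih, qPoch_succ, qPoch_succ, qPoch_succ]
    field_simp [hw n]
    ring

lemma coeff_succ_of_qDifference {R : Type*} [CommRing R] {u v w : R} (huv : u * v = w)
    {g : PowerSeries R}
    (heq : (1 - X) * g = (1 + X * C u + X * C v) * rescale w g + X * C w * rescale (w ^ 2) g)
    (n : ℕ) :
    (1 - w ^ (n + 1)) * coeff (n + 1) g = (1 + u * w ^ n) * (1 + v * w ^ n) * coeff n g := by
  have h := congrArg (coeff (n + 1)) heq
  simp only [sub_mul, add_mul, one_mul, map_sub, map_add, mul_assoc, coeff_succ_X_mul,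
    coeff_C_mul, coeff_rescale] at h
  linear_combination h - (w ^ n) ^ 2 * coeff n g * huv

theorem qDifference_unique_solution_general (q : ℂ) (hq : ‖q‖ < 1)
    (d r : ℕ) (hr2 : 2 * r < d)
    (g : PowerSeries ℂ) (h0 : PowerSeries.constantCoeff g = 1)
    (heq : (1 - PowerSeries.X) * g =
      (1 + PowerSeries.X * PowerSeries.C (q ^ r)
          + PowerSeries.X * PowerSeries.C (q ^ (d - r))) * PowerSeries.rescale (q ^ d) g
        + PowerSeries.X * PowerSeries.C (q ^ d) * PowerSeries.rescale (q ^ (2 * d)) g) :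
    ∀ n : ℕ, PowerSeries.coeff n g =
      qPoch (-q ^ r) (q ^ d) n * qPoch (-q ^ (d - r)) (q ^ d) n /
        qPoch (q ^ d) (q ^ d) n := by
  have huv : q ^ r * q ^ (d - r) = q ^ d := by rw [← pow_add, Nat.add_sub_of_le (by omega)]
  have hw : ‖q ^ d‖ < 1 := norm_pow_lt_one hq (by omega)
  rw [mul_comm 2 d, pow_mul] at heq
  exact eq_qPoch_div_qPoch_of_recurrence (qPoch_self_ne_zero hw)
    (by rwa [coeff_zero_eq_constantCoeff_apply]) (coeff_succ_of_qDifference huv heq)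

/-- If `g` is a power series in `x` with `g(0) = 1` satisfying the q-difference equation
`(1-x) g(x) = (1 + x q^r + x q^{d-r}) g(x q^d) + x q^d g(x q^{2d})`, then
`g(x) = Σ_{n≥0} x^n (-q^r; q^d)_n (-q^{d-r}; q^d)_n / (q^d; q^d)_n`, i.e. its `n`-th
coefficient is `(-q^r; q^d)_n (-q^{d-r}; q^d)_n / (q^d; q^d)_n`. -/
theorem qDifference_unique_solution (q : ℂ) (hq : ‖q‖ < 1)
    (d r : ℕ) (hd : 3 ≤ d) (hr1 : 1 ≤ r) (hr2 : 2 * r < d)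
    (g : PowerSeries ℂ) (h0 : PowerSeries.constantCoeff g = 1)
    (heq : (1 - PowerSeries.X) * g =
      (1 + PowerSeries.X * PowerSeries.C (q ^ r)
          + PowerSeries.X * PowerSeries.C (q ^ (d - r))) * PowerSeries.rescale (q ^ d) g
        + PowerSeries.X * PowerSeries.C (q ^ d) * PowerSeries.rescale (q ^ (2 * d)) g) :
    ∀ n : ℕ, PowerSeries.coeff n g =
      qPoch (-q ^ r) (q ^ d) n * qPoch (-q ^ (d - r)) (q ^ d) n /
        qPoch (q ^ d) (q ^ d) n :=
  qDifference_unique_solution_general q hq d r hr2 g h0 heq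
end

section
/- The Jacobi theta function satisfies the Jacobi triple product identity: Σ_{n∈1/2+ℤ} e^{πin²τ + 2πin(w+1/2)} = -i q^{1/8} ζ^{-1/2} ∏_{n≥1} (1-q^n)(1-ζ q^{n-1})(1-ζ^{-1} q^n), where q = e^{2πiτ}, ζ = e^{2πiw}, and τ is in the upper half-plane. -/
/-!
Gauss's `q`-binomial theorem `∏_{j<m} (1 + z q^j) = ∑_k [m choose k]_q q^(k choose 2) z^k`, taken at
`m = 2N`, `q = p²`, `z = x p^(1-2N)`, gives the finite triple product
`∏_{i<N} (1 + x p^(2i+1)) (1 + x⁻¹ p^(2i+1)) = ∑_{|n| ≤ N} [2N choose N+n]_{p²} x^n p^(n²)`.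
For fixed `n`, `[2N choose N+n]_q = (q;q)_{2N} / ((q;q)_{N+n} (q;q)_{N-n}) → 1 / (q;q)_∞`, and
all `q`-binomial coefficients are bounded because `(q;q)_m` converges to a nonzero limit, so
Tannery's theorem lets `N → ∞`. This is Jacobi's product for `θ(z, τ)`; the stated identity is
`θ(w + 1/2 - τ/2, τ)`, reindexed by `n ↦ n + 1`.
-/

open Complex Finset Filter Topology
open scoped Real

lemma natCast_two_mul_choose_two {R : Type*} [CommRing R] (k : ℕ) :
    ((2 * k.choose 2 : ℕ) : R) = (k : R) ^ 2 - k := by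
  induction k with
  | zero => simp
  | succ k ih =>
    rw [Nat.choose_succ_succ, Nat.choose_one_right]
    push_cast at ih ⊢
    linear_combination ih

lemma sum_range_two_mul_add_one (N : ℕ) : ∑ i ∈ range N, (2 * i + 1) = N ^ 2 := by
  induction N with
  | zero => simp
  | succ N ih => rw [sum_range_succ, ih]; ring

section QBinomial

variable {R : Type*} [CommRing R] (q : R)

def qBinomial : ℕ → ℕ → R
  | _, 0 => 1
  | 0, _ + 1 => 0
  | m + 1, k + 1 => q ^ (k + 1) * qBinomial m (k + 1) + qBinomial m k

@[simp] lemma qBinomial_zero_right (m : ℕ) : qBinomial q m 0 = 1 := by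
  cases m <;> rfl

lemma qBinomial_succ_succ (m k : ℕ) :
    qBinomial q (m + 1) (k + 1) = q ^ (k + 1) * qBinomial q m (k + 1) + qBinomial q m k := rfl

lemma qBinomial_eq_zero_of_lt {m k : ℕ} (h : m < k) : qBinomial q m k = 0 := by
  induction m generalizing k with
  | zero => obtain ⟨k, rfl⟩ := Nat.exists_eq_add_one_of_ne_zero (by omega : k ≠ 0); rfl
  | succ m ih =>
    obtain ⟨k, rfl⟩ := Nat.exists_eq_add_one_of_ne_zero (by omega : k ≠ 0)
    rw [qBinomial_succ_succ, ih (by omega), ih (by omega), mul_zero, add_zero]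

@[simp] lemma qBinomial_self (m : ℕ) : qBinomial q m m = 1 := by
  induction m with
  | zero => rfl
  | succ m ih => rw [qBinomial_succ_succ, qBinomial_eq_zero_of_lt q m.lt_succ_self, ih]; ring

/-- `(q; q)_m` in the usual notation. -/
def qPochhammer (m : ℕ) : R := ∏ i ∈ range m, (1 - q ^ (i + 1))

lemma qPochhammer_succ (m : ℕ) : qPochhammer q (m + 1) = qPochhammer q m * (1 - q ^ (m + 1)) :=
  prod_range_succ _ _

lemma qBinomial_add_mul_qPochhammer (k l : ℕ) :
    qBinomial q (k + l) k * qPochhammer q k * qPochhammer q l = qPochhammer q (k + l) := by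
  induction k generalizing l with
  | zero => simp [qPochhammer]
  | succ k ihk =>
    induction l with
    | zero => simp [qPochhammer]
    | succ l ihl =>
      have hk := ihk (l + 1)
      rw [show k + (l + 1) = k + 1 + l by ring] at hk
      rw [show k + 1 + (l + 1) = k + 1 + l + 1 by ring, qBinomial_succ_succ]
      -- the two Pascal summands contribute `(q;q)_{k+l+1}` times `q^(k+1) (1 - q^(l+1))` and
      -- `1 - q^(k+1)`, which add up to `1 - q^(k+l+2)`
      linear_combination q ^ (k + 1) * qBinomial q (k + 1 + l) (k + 1) * qPochhammer q (k + 1) *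
          qPochhammer_succ q l + q ^ (k + 1) * (1 - q ^ (l + 1)) * ihl +
        qBinomial q (k + 1 + l) k * qPochhammer q (l + 1) * qPochhammer_succ q k +
        (1 - q ^ (k + 1)) * hk - qPochhammer_succ q (k + 1 + l)

theorem prod_one_add_mul_pow_eq_sum (m : ℕ) (z : R) :
    ∏ j ∈ range m, (1 + z * q ^ j) =
      ∑ k ∈ range (m + 1), qBinomial q m k * q ^ k.choose 2 * z ^ k := by
  induction m generalizing z with
  | zero => simp
  | succ m ih =>
    have hprod : ∏ j ∈ range m, (1 + z * q ^ (j + 1)) =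
        ∑ k ∈ range (m + 2), qBinomial q m k * q ^ k.choose 2 * (z * q) ^ k := by
      rw [sum_range_succ, qBinomial_eq_zero_of_lt q m.lt_succ_self, zero_mul, zero_mul, add_zero,
        ← ih]
      exact prod_congr rfl fun j _ => by ring
    have hterm (k : ℕ) : qBinomial q (m + 1) (k + 1) * q ^ (k + 1).choose 2 * z ^ (k + 1) =
        qBinomial q m (k + 1) * q ^ (k + 1).choose 2 * (z * q) ^ (k + 1) +
          qBinomial q m k * q ^ k.choose 2 * (z * q) ^ k * z := by
      rw [qBinomial_succ_succ, Nat.choose_succ_succ, Nat.choose_one_right]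
      ring
    rw [prod_range_succ', hprod, sum_range_succ' _ (m + 1), sum_range_succ' _ (m + 1)]
    simp only [hterm, sum_add_distrib, ← sum_mul]
    rw [sum_range_succ' (fun k => qBinomial q m k * q ^ k.choose 2 * (z * q) ^ k),
      sum_range_succ (fun k => qBinomial q m (k + 1) * q ^ (k + 1).choose 2 * (z * q) ^ (k + 1)),
      qBinomial_eq_zero_of_lt q m.lt_succ_self, qBinomial_zero_right, qBinomial_zero_right]
    ring

-- The guard matters: `Int.toNat` would send every `n < -N` to the index `0`.
def qBinomialCentered (N : ℕ) (n : ℤ) : R :=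
  if -(N : ℤ) ≤ n then qBinomial q (2 * N) (N + n).toNat else 0

lemma qBinomialCentered_natCast_sub (N k : ℕ) :
    qBinomialCentered q N (k - N) = qBinomial q (2 * N) k := by
  rw [qBinomialCentered, if_pos (by omega), add_sub_cancel, Int.toNat_natCast]

end QBinomial

section FiniteTripleProduct

variable {K : Type*} [Field K] {p x : K}

lemma prod_range_two_mul_one_add_mul_zpow (hp : p ≠ 0) (hx : x ≠ 0) (N : ℕ) :
    ∏ j ∈ range (2 * N), (1 + x * p ^ (1 - 2 * N : ℤ) * (p ^ 2) ^ j) = x ^ N * (p ^ (N ^ 2))⁻¹ *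
      ∏ i ∈ range N, (1 + x * p ^ (2 * i + 1)) * (1 + x⁻¹ * p ^ (2 * i + 1)) := by
  have hj (j : ℕ) : x * p ^ (1 - 2 * N : ℤ) * (p ^ 2) ^ j = x * p ^ (2 * j + 1 - 2 * N : ℤ) := by
    rw [mul_assoc, ← pow_mul, ← zpow_natCast, ← zpow_add₀ hp]
    push_cast; ring_nf
  have hlow (i : ℕ) (hi : i ∈ range N) : 1 + x * p ^ (1 - 2 * N : ℤ) * (p ^ 2) ^ (N - 1 - i) =
      x * (p ^ (2 * i + 1))⁻¹ * (1 + x⁻¹ * p ^ (2 * i + 1)) := by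
    rw [mem_range] at hi
    rw [hj, show (2 * (N - 1 - i : ℕ) + 1 - 2 * N : ℤ) = -(2 * i + 1 : ℕ) by omega, zpow_neg,
      zpow_natCast]
    field_simp
    ring
  have hhigh (i : ℕ) :
      1 + x * p ^ (1 - 2 * N : ℤ) * (p ^ 2) ^ (N + i) = 1 + x * p ^ (2 * i + 1) := by
    rw [hj, show (2 * (N + i : ℕ) + 1 - 2 * N : ℤ) = (2 * i + 1 : ℕ) by omega, zpow_natCast]
  rw [two_mul, prod_range_add, ← prod_range_reflect, prod_congr rfl hlow,
    prod_congr rfl fun i _ => hhigh i, prod_mul_distrib, prod_mul_distrib, prod_mul_distrib,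
    prod_const, card_range, prod_inv_distrib, prod_pow_eq_pow_sum, sum_range_two_mul_add_one]
  ring

theorem prod_one_add_mul_pow_odd_eq_sum (hp : p ≠ 0) (hx : x ≠ 0) (N : ℕ) :
    ∏ i ∈ range N, (1 + x * p ^ (2 * i + 1)) * (1 + x⁻¹ * p ^ (2 * i + 1)) =
      ∑ k ∈ range (2 * N + 1),
        qBinomial (p ^ 2) (2 * N) k * (x ^ ((k : ℤ) - N) * p ^ (((k : ℤ) - N) ^ 2)) := by
  have hterm (k : ℕ) :
      qBinomial (p ^ 2) (2 * N) k * (p ^ 2) ^ k.choose 2 * (x * p ^ (1 - 2 * N : ℤ)) ^ k =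
        x ^ N * (p ^ (N ^ 2))⁻¹ *
          (qBinomial (p ^ 2) (2 * N) k * (x ^ ((k : ℤ) - N) * p ^ (((k : ℤ) - N) ^ 2))) := by
    have hxk : x ^ k = x ^ N * x ^ ((k : ℤ) - N) := by
      rw [← zpow_natCast, ← zpow_natCast, ← zpow_add₀ hx, add_sub_cancel]
    have hpk : (p ^ 2) ^ k.choose 2 * (p ^ (1 - 2 * N : ℤ)) ^ k =
        (p ^ (N ^ 2))⁻¹ * p ^ (((k : ℤ) - N) ^ 2) := by
      rw [← pow_mul, ← zpow_natCast, natCast_two_mul_choose_two, ← zpow_natCast, ← zpow_mul,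
        ← zpow_add₀ hp, ← zpow_natCast, ← zpow_neg, ← zpow_add₀ hp]
      push_cast; ring_nf
    rw [mul_pow, hxk]
    linear_combination qBinomial (p ^ 2) (2 * N) k * x ^ N * x ^ ((k : ℤ) - N) * hpk
  refine mul_left_cancel₀ (by positivity : x ^ N * (p ^ (N ^ 2))⁻¹ ≠ 0) ?_
  rw [← prod_range_two_mul_one_add_mul_zpow hp hx, prod_one_add_mul_pow_eq_sum, mul_sum]
  exact sum_congr rfl fun k _ => hterm k

theorem prod_one_add_mul_pow_odd_eq_tsum [TopologicalSpace K] (hp : p ≠ 0) (hx : x ≠ 0) (N : ℕ) :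
    ∏ i ∈ range N, (1 + x * p ^ (2 * i + 1)) * (1 + x⁻¹ * p ^ (2 * i + 1)) =
      ∑' n : ℤ, qBinomialCentered (p ^ 2) N n * (x ^ n * p ^ (n ^ 2)) := by
  have hinj : Function.Injective fun k : ℕ => (k : ℤ) - N := fun a b h => by simpa using h
  have hsupp : Function.support (fun n : ℤ => qBinomialCentered (p ^ 2) N n * (x ^ n * p ^ (n ^ 2)))
      ⊆ Set.range fun k : ℕ => (k : ℤ) - N := by
    intro n hn
    by_cases h : -(N : ℤ) ≤ n
    · exact ⟨(N + n).toNat, by simp only; omega⟩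
    · simp [qBinomialCentered, h] at hn
  rw [← hinj.tsum_eq hsupp, tsum_eq_sum (s := range (2 * N + 1)),
    prod_one_add_mul_pow_odd_eq_sum hp hx]
  · simp only [qBinomialCentered_natCast_sub]
  · intro k hk
    rw [qBinomialCentered_natCast_sub, qBinomial_eq_zero_of_lt _ (by simpa using hk), zero_mul]

end FiniteTripleProduct

section Limits

variable {𝕜 : Type*} [NormedField 𝕜] {q : 𝕜}

lemma summable_norm_pow_succ (hq : ‖q‖ < 1) : Summable fun n : ℕ => ‖-q ^ (n + 1)‖ := by
  simpa [norm_pow, pow_succ] using (summable_geometric_of_lt_one (norm_nonneg q) hq).mul_right ‖q‖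

lemma one_sub_pow_succ_ne_zero (hq : ‖q‖ < 1) (n : ℕ) : 1 - q ^ (n + 1) ≠ 0 := by
  refine sub_ne_zero.2 fun h => ?_
  have : ‖q ^ (n + 1)‖ < 1 := by rw [norm_pow]; exact pow_lt_one₀ (norm_nonneg q) hq n.succ_ne_zero
  rw [← h, norm_one] at this
  exact this.false

lemma qPochhammer_ne_zero (hq : ‖q‖ < 1) (m : ℕ) : qPochhammer q m ≠ 0 :=
  prod_ne_zero_iff.2 fun n _ => one_sub_pow_succ_ne_zero hq n

variable [CompleteSpace 𝕜]

lemma tprod_one_sub_pow_succ_ne_zero (hq : ‖q‖ < 1) : ∏' n : ℕ, (1 - q ^ (n + 1)) ≠ 0 := by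
  have := tprod_one_add_ne_zero_of_summable (f := fun n => -q ^ (n + 1))
    (fun n => by simpa only [← sub_eq_add_neg] using one_sub_pow_succ_ne_zero hq n)
    (summable_norm_pow_succ hq)
  simpa only [← sub_eq_add_neg] using this

lemma multipliable_one_sub_pow_succ (hq : ‖q‖ < 1) : Multipliable fun n : ℕ => 1 - q ^ (n + 1) := by
  have := multipliable_one_add_of_summable (f := fun n => -q ^ (n + 1)) (summable_norm_pow_succ hq)
  simpa only [← sub_eq_add_neg] using this

lemma tendsto_qPochhammer (hq : ‖q‖ < 1) :
    Tendsto (qPochhammer q) atTop (𝓝 (∏' n : ℕ, (1 - q ^ (n + 1)))) :=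
  (multipliable_one_sub_pow_succ hq).hasProd.tendsto_prod_nat

lemma exists_norm_qBinomial_le (hq : ‖q‖ < 1) : ∃ M, ∀ m k, ‖qBinomial q m k‖ ≤ M := by
  obtain ⟨C, hC⟩ := isBounded_iff_forall_norm_le.1
    (Metric.isBounded_range_of_tendsto _ (tendsto_qPochhammer hq))
  obtain ⟨C', hC'⟩ := isBounded_iff_forall_norm_le.1 (Metric.isBounded_range_of_tendsto _
    ((tendsto_qPochhammer hq).inv₀ (tprod_one_sub_pow_succ_ne_zero hq)))
  have hC0 : 0 ≤ C := (norm_nonneg _).trans (hC _ ⟨0, rfl⟩)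
  have hC'0 : 0 ≤ C' := (norm_nonneg _).trans (hC' _ ⟨0, rfl⟩)
  refine ⟨C * C' * C', fun m k => ?_⟩
  rcases lt_or_ge m k with hmk | hkm
  · rw [qBinomial_eq_zero_of_lt q hmk, norm_zero]
    positivity
  obtain ⟨l, rfl⟩ := Nat.exists_eq_add_of_le hkm
  have h := qBinomial_add_mul_qPochhammer q k l
  rw [mul_assoc, ← eq_div_iff (mul_ne_zero (qPochhammer_ne_zero hq k)
    (qPochhammer_ne_zero hq l))] at h
  rw [h, div_eq_mul_inv, mul_inv, ← mul_assoc, norm_mul, norm_mul]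
  gcongr
  exacts [hC _ ⟨_, rfl⟩, hC' _ ⟨_, rfl⟩, hC' _ ⟨_, rfl⟩]

lemma tendsto_qBinomialCentered (hq : ‖q‖ < 1) (n : ℤ) :
    Tendsto (fun N => qBinomialCentered q N n) atTop (𝓝 (∏' k : ℕ, (1 - q ^ (k + 1)))⁻¹) := by
  have hP := tprod_one_sub_pow_succ_ne_zero hq
  have hshift (a : ℤ) : Tendsto (fun N : ℕ => ((N : ℤ) + a).toNat) atTop atTop :=
    tendsto_atTop_atTop.2 fun b => ⟨b + a.natAbs, fun N hN => by omega⟩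
  have hdouble : Tendsto (fun N : ℕ => 2 * N) atTop atTop :=
    tendsto_atTop_atTop.2 fun b => ⟨b, fun N hN => by omega⟩
  have hlim := (((tendsto_qPochhammer hq).comp hdouble).mul
    (((tendsto_qPochhammer hq).comp (hshift n)).inv₀ hP)).mul
    (((tendsto_qPochhammer hq).comp (hshift (-n))).inv₀ hP)
  rw [mul_inv_cancel₀ hP, one_mul] at hlim
  refine hlim.congr' ?_
  filter_upwards [eventually_ge_atTop n.natAbs] with N hN
  have h := qBinomial_add_mul_qPochhammer q ((N : ℤ) + n).toNat ((N : ℤ) + -n).toNat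
  rw [show ((N : ℤ) + n).toNat + ((N : ℤ) + -n).toNat = 2 * N by omega] at h
  rw [qBinomialCentered, if_pos (by omega), Function.comp_apply, Function.comp_apply,
    Function.comp_apply, ← h]
  field_simp [qPochhammer_ne_zero hq]

lemma multipliable_one_add_mul_pow_odd {p : 𝕜} (hp : ‖p‖ < 1) (c : 𝕜) :
    Multipliable fun i : ℕ => 1 + c * p ^ (2 * i + 1) := by
  refine multipliable_one_add_of_summable ?_
  have hp2 : ‖p‖ ^ 2 < 1 := pow_lt_one₀ (norm_nonneg p) hp two_ne_zero
  refine ((summable_geometric_of_lt_one (by positivity) hp2).mul_left (‖c‖ * ‖p‖)).congr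
    fun i => ?_
  rw [norm_mul, norm_pow, ← pow_mul]
  ring

end Limits

lemma jacobiTheta₂_term_eq_zpow (n : ℤ) (z τ : ℂ) :
    jacobiTheta₂_term n z τ = cexp (2 * π * I * z) ^ n * cexp (π * I * τ) ^ (n ^ 2) := by
  rw [jacobiTheta₂_term, ← exp_int_mul, ← exp_int_mul, ← Complex.exp_add]
  push_cast
  ring_nf

theorem jacobiTheta₂_eq_tprod (z : ℂ) {τ : ℂ} (hτ : 0 < τ.im) :
    jacobiTheta₂ z τ = ∏' n : ℕ, (1 - cexp (2 * π * I * τ) ^ (n + 1)) *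
      (1 + cexp (2 * π * I * z) * cexp (π * I * τ) ^ (2 * n + 1)) *
      (1 + (cexp (2 * π * I * z))⁻¹ * cexp (π * I * τ) ^ (2 * n + 1)) := by
  set p := cexp (π * I * τ)
  set x := cexp (2 * π * I * z)
  have hp : ‖p‖ < 1 := by
    rw [norm_exp, Real.exp_lt_one_iff]
    simpa using mul_pos Real.pi_pos hτ
  have hp2 : ‖p ^ 2‖ < 1 := by rw [norm_pow]; exact pow_lt_one₀ (norm_nonneg p) hp two_ne_zero
  have hq : cexp (2 * π * I * τ) = p ^ 2 := by
    rw [← Complex.exp_nat_mul]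
    ring_nf
  obtain ⟨M, hM⟩ := exists_norm_qBinomial_le hp2
  have hsum := tendsto_tsum_of_dominated_convergence
    (f := fun N n => qBinomialCentered (p ^ 2) N n * jacobiTheta₂_term n z τ)
    (bound := fun n => M * ‖jacobiTheta₂_term n z τ‖)
    ((hasSum_jacobiTheta₂_term z hτ).summable.norm.mul_left M)
    (fun n => (tendsto_qBinomialCentered hp2 n).mul_const _)
    (Eventually.of_forall fun N n => by
      rw [norm_mul]
      gcongr
      unfold qBinomialCentered
      split_ifs
      · exact hM _ _
      · simpa using (norm_nonneg _).trans (hM 0 0))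
  have hfin (N : ℕ) : ∑' n : ℤ, qBinomialCentered (p ^ 2) N n * jacobiTheta₂_term n z τ =
      ∏ i ∈ range N, (1 + x * p ^ (2 * i + 1)) * (1 + x⁻¹ * p ^ (2 * i + 1)) := by
    simp only [jacobiTheta₂_term_eq_zpow]
    exact (prod_one_add_mul_pow_odd_eq_tsum (Complex.exp_ne_zero _) (Complex.exp_ne_zero _) N).symm
  have hA := multipliable_one_sub_pow_succ hp2
  have hBC := (multipliable_one_add_mul_pow_odd hp x).mul (multipliable_one_add_mul_pow_odd hp x⁻¹)
  have hθ := tendsto_nhds_unique (hsum.congr hfin) hBC.hasProd.tendsto_prod_nat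
  rw [tsum_mul_left] at hθ
  rw [tprod_congr fun n => mul_assoc _ _ _, hq, hA.tprod_mul hBC, ← hθ, jacobiTheta₂]
  field_simp [tprod_one_sub_pow_succ_ne_zero hp2]

/-- The Jacobi triple product identity for Jacobi's theta function: for `τ ∈ ℍ`,
`w ∈ ℂ`, `q = e^{2πiτ}`, `ζ = e^{2πiw}`:
`Σ_{n ∈ 1/2+ℤ} e^{πin²τ + 2πin(w+1/2)}
  = -i q^{1/8} ζ^{-1/2} ∏_{n≥1} (1-q^n)(1-ζq^{n-1})(1-ζ⁻¹q^n)`,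
where `q^{1/8} = e^{πiτ/4}` and `ζ^{-1/2} = e^{-πiw}`. -/
theorem jacobi_triple_product_theta (τ w : ℂ) (hτ : 0 < τ.im) :
    ∑' n : ℤ, Complex.exp
        (Real.pi * I * (n + 1 / 2) ^ 2 * τ + 2 * Real.pi * I * (n + 1 / 2) * (w + 1 / 2)) =
      -I * Complex.exp (Real.pi * I * τ / 4) * Complex.exp (-(Real.pi * I * w)) *
        ∏' n : ℕ,
          ((1 - Complex.exp (2 * Real.pi * I * τ) ^ (n + 1)) *
            (1 - Complex.exp (2 * Real.pi * I * w) * Complex.exp (2 * Real.pi * I * τ) ^ n) *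
            (1 - (Complex.exp (2 * Real.pi * I * w))⁻¹ *
              Complex.exp (2 * Real.pi * I * τ) ^ (n + 1))) := by
  set z := w + 1 / 2 - τ / 2 with hz
  have hterm (n : ℤ) :
      cexp (π * I * (n + 1 / 2) ^ 2 * τ + 2 * π * I * (n + 1 / 2) * (w + 1 / 2)) =
        -I * cexp (π * I * τ / 4) * cexp (-(π * I * w)) * jacobiTheta₂_term (n + 1) z τ := by
    rw [← exp_neg_pi_div_two_mul_I, ← Complex.exp_add, ← Complex.exp_add, jacobiTheta₂_term,
      ← Complex.exp_add, hz]
    push_cast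
    ring_nf
  have hx : cexp (2 * π * I * z) = -(cexp (2 * π * I * w) * (cexp (π * I * τ))⁻¹) := by
    rw [show 2 * π * I * z = 2 * π * I * w + π * I + -(π * I * τ) by ring,
      Complex.exp_add, Complex.exp_add, exp_pi_mul_I, Complex.exp_neg]
    ring
  have hq : cexp (2 * π * I * τ) = cexp (π * I * τ) ^ 2 := by
    rw [← Complex.exp_nat_mul]
    ring_nf
  have hshift : ∑' n : ℤ, jacobiTheta₂_term (n + 1) z τ = jacobiTheta₂ z τ :=
    (Equiv.addRight 1).tsum_eq (jacobiTheta₂_term · z τ)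
  rw [tsum_congr hterm, tsum_mul_left, hshift, jacobiTheta₂_eq_tprod z hτ, hx, hq]
  congr 1
  refine tprod_congr fun n => ?_
  field_simp
  ring
end
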